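/- arXiv:2209.02844 — 2 statements merged into one kernel-verified Lean document; each statement's English description precedes it below -/
import Mathlib

section
/- Suppose the cluster size distribution is a shifted Poisson: μ_k = λ^{k−1} e^{−λ}/(k−1)! for k ≥ 1 and μ_0 = 0, where λ > 0. Then for all integers 1 ≤ k ≤ n, P[K_n = k | E_n] = (e^{−kλ} (kλ)^{n−k}/(n−k)!) / (Σ_{ℓ=1}^{n} e^{−ℓλ} (ℓλ)^{n−ℓ}/(n−ℓ)!). -/
open MeasureTheory ProbabilityTheory Finset
open scoped NNReal Nat

/-!
Subtracting one from each cluster size leaves i.i.d. Poisson(λ) variables, so by additivity of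
independent Poisson laws the first `l` clusters have total size `l + Po(lλ)`, and
`P[S_1 + ⋯ + S_l = n]` is the `l`-th term of the formula. The partial sums are strictly
increasing, so `E_n` is the disjoint union over `1 ≤ l ≤ n` of these events, and the conditional
probability is the ratio of the `k`-th term to their sum.
-/

lemma le_sum_range_of_pos {f : ℕ → ℕ} (hf : ∀ i, 0 < f i) (l : ℕ) :
    l ≤ ∑ i ∈ range l, f i := by
  simpa using card_nsmul_le_sum (range l) f 1 fun i _ => hf i

lemma strictMono_sum_range_of_pos {f : ℕ → ℕ} (hf : ∀ i, 0 < f i) :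
    StrictMono fun l => ∑ i ∈ range l, f i :=
  strictMono_nat_of_lt_succ fun l => by simpa [sum_range_succ] using hf l

lemma exists_sum_range_eq_iff_of_pos {f : ℕ → ℕ} (hf : ∀ i, 0 < f i) {n : ℕ}
    (hn : 0 < n) :
    (∃ K, ∑ i ∈ range K, f i = n) ↔ ∃ l ∈ Icc 1 n, ∑ i ∈ range l, f i = n := by
  refine ⟨fun ⟨K, hK⟩ => ⟨K, mem_Icc.2 ⟨?_, hK ▸ le_sum_range_of_pos hf K⟩, hK⟩,
    fun ⟨l, _, hl⟩ => ⟨l, hl⟩⟩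
  rcases K with _ | K
  · simp only [range_zero, sum_empty] at hK
    omega
  · omega

lemma poissonMeasure_zero : Po(0) = Measure.dirac 0 := by
  refine Measure.ext_of_singleton fun m => ?_
  rcases m with _ | m <;> simp [poissonMeasure_singleton]

section

variable {Ω : Type*} [MeasurableSpace Ω] {P : Measure Ω}

lemma hasLaw_sub_one_poissonMeasure [IsFiniteMeasure P] {X : Ω → ℕ} (hX : Measurable X)
    (hpos : ∀ ω, 0 < X ω) {r : ℝ≥0}
    (hlaw : ∀ m : ℕ, P.real {ω | X ω = m + 1} = Real.exp (-r) * r ^ m / m !) :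
    HasLaw (fun ω => X ω - 1) Po(r) P := by
  refine ⟨(hX.sub_const 1).aemeasurable, Measure.ext_of_singleton fun m => ?_⟩
  have hfiber : (fun ω => X ω - 1) ⁻¹' {m} = {ω | X ω = m + 1} := by
    ext ω
    have := hpos ω
    simp only [Set.mem_preimage, Set.mem_singleton_iff, Set.mem_ofPred_eq]
    omega
  rw [Measure.map_apply (hX.sub_const 1) (measurableSet_singleton m), hfiber,
    poissonMeasure_singleton, ← hlaw, ofReal_measureReal]

variable [IsProbabilityMeasure P]

lemma hasLaw_sum_range_poissonMeasure {T : ℕ → Ω → ℕ} (hind : iIndepFun T P) {r : ℝ≥0}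
    (hlaw : ∀ i, HasLaw (T i) Po(r) P) (l : ℕ) :
    HasLaw (∑ i ∈ range l, T i) Po(l * r) P := by
  induction l with
  | zero =>
    simpa [poissonMeasure_zero] using hasLaw_dirac_of_ae_eq (P := P) (X := 0) (x := 0) (by rfl)
  | succ l ih =>
    rw [sum_range_succ, Nat.cast_succ, add_one_mul]
    exact (hind.indepFun_finsetSum_of_notMem₀ (fun i => (hlaw i).aemeasurable)
      notMem_range_self).hasLaw_add_poissonMeasure ih (hlaw l)

lemma measureReal_sum_range_eq_of_shifted_poisson {S : ℕ → Ω → ℕ}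
    (hmeas : ∀ i, Measurable (S i)) (hindep : iIndepFun S P)
    (hident : ∀ i, IdentDistrib (S i) (S 0) P P) (hpos : ∀ i ω, 0 < S i ω)
    {lam : ℝ} (hlam : 0 ≤ lam)
    (hlaw : ∀ m : ℕ, P.real {ω | S 0 ω = m + 1} = lam ^ m * Real.exp (-lam) / m !)
    {l n : ℕ} (hln : l ≤ n) :
    P.real {ω | ∑ j ∈ range l, S j ω = n}
      = Real.exp (-(l * lam)) * (l * lam) ^ (n - l) / (n - l)! := by
  lift lam to ℝ≥0 using hlam
  set T : ℕ → Ω → ℕ := fun i ω => S i ω - 1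
  have hsub : Measurable fun s : ℕ => s - 1 := measurable_from_nat
  have hT0 : HasLaw (T 0) Po(lam) P :=
    hasLaw_sub_one_poissonMeasure (hmeas 0) (hpos 0) fun m => by rw [hlaw, mul_comm]
  have hT : HasLaw (∑ i ∈ range l, T i) Po(l * lam) P :=
    hasLaw_sum_range_poissonMeasure (hindep.comp (fun _ s => s - 1) fun _ => hsub)
      (fun i => ((hident i).comp hsub).symm.hasLaw hT0) l
  have hshift : ∀ ω, ∑ j ∈ range l, S j ω = ∑ j ∈ range l, T j ω + l := by
    intro ω
    calc ∑ j ∈ range l, S j ω = ∑ j ∈ range l, (T j ω + 1) :=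
          sum_congr rfl fun j _ => (Nat.sub_add_cancel (hpos j ω)).symm
      _ = ∑ j ∈ range l, T j ω + l := by simp [sum_add_distrib]
  have hset :
      {ω | ∑ j ∈ range l, S j ω = n} = {ω | (∑ i ∈ range l, T i) ω = n - l} := by
    ext ω
    simp only [Set.mem_ofPred_eq, Finset.sum_apply, hshift]
    omega
  rw [hset, hT.measureReal_eq (p := (· = n - l)) (measurableSet_singleton _),
    Set.ofPred_eq_eq_singleton, poissonMeasure_real_singleton]
  push_cast
  rfl

lemma cond_real_sum_range_eq_div {S : ℕ → Ω → ℕ} (hmeas : ∀ i, Measurable (S i))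
    (hpos : ∀ i ω, 0 < S i ω) {n k : ℕ} (hk : 1 ≤ k) (hkn : k ≤ n) :
    (cond P {ω | ∃ K, ∑ j ∈ range K, S j ω = n}).real {ω | ∑ j ∈ range k, S j ω = n}
      = P.real {ω | ∑ j ∈ range k, S j ω = n}
          / ∑ l ∈ Icc 1 n, P.real {ω | ∑ j ∈ range l, S j ω = n} := by
  set A : ℕ → Set Ω := fun l => {ω | ∑ j ∈ range l, S j ω = n}
  have hA : ∀ l, MeasurableSet (A l) := fun l =>
    (Finset.measurable_sum _ fun i _ => hmeas i) (measurableSet_singleton n)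
  have hdisj : (↑(Icc 1 n) : Set ℕ).PairwiseDisjoint A := fun a _ b _ hab =>
    Set.disjoint_left.2 fun ω ha hb =>
      hab ((strictMono_sum_range_of_pos (hpos · ω)).injective (ha.trans hb.symm))
  have hE : {ω | ∃ K, ∑ j ∈ range K, S j ω = n} = ⋃ l ∈ Icc 1 n, A l := by
    ext ω
    simpa [A] using exists_sum_range_eq_iff_of_pos (hpos · ω) (by omega)
  have hAE : A k ⊆ ⋃ l ∈ Icc 1 n, A l := Set.subset_biUnion_of_mem (mem_Icc.2 ⟨hk, hkn⟩)
  rw [hE, measureReal_def,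
    cond_apply (Finset.measurableSet_biUnion _ fun l _ => hA l),
    Set.inter_eq_self_of_subset_right hAE, ENNReal.toReal_mul, ENNReal.toReal_inv,
    ← measureReal_def, ← measureReal_def, measureReal_biUnion_finset hdisj fun l _ => hA l,
    inv_mul_eq_div]

end

/-- If cluster sizes are shifted Poisson,
`μ_k = λ^{k−1} e^{−λ}/(k−1)!` for `k ≥ 1` with `λ > 0`, then for all `1 ≤ k ≤ n`,
`P[K_n = k | E_n] = (e^{−kλ}(kλ)^{n−k}/(n−k)!) / (∑_{ℓ=1}^n e^{−ℓλ}(ℓλ)^{n−ℓ}/(n−ℓ)!)`. -/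
theorem esc_poisson_number_of_clusters
    {Ω : Type*} [MeasurableSpace Ω] (P : Measure Ω) [IsProbabilityMeasure P]
    (S : ℕ → Ω → ℕ)
    (hmeas : ∀ i, Measurable (S i))
    (hindep : iIndepFun S P)
    (hident : ∀ i, IdentDistrib (S i) (S 0) P P)
    (hpos : ∀ i ω, 0 < S i ω)
    (μ : ℕ → ℝ)
    (hμ : ∀ s, μ s = (P {ω | S 0 ω = s}).toReal)
    (E : ℕ → Set Ω)
    (hE : ∀ n, E n = {ω | ∃ K, ∑ j ∈ Finset.range K, S j ω = n})
    (lam : ℝ) (hlam : 0 < lam)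
    (hform : ∀ k : ℕ, 1 ≤ k →
      μ k = lam ^ (k - 1) * Real.exp (-lam) / (k - 1).factorial)
    (n k : ℕ) (hk : 1 ≤ k) (hkn : k ≤ n) :
    (ProbabilityTheory.cond P (E n) {ω | ∑ j ∈ Finset.range k, S j ω = n}).toReal
      = (Real.exp (-(k * lam)) * (k * lam) ^ (n - k) / (n - k).factorial) /
          ∑ l ∈ Finset.Icc 1 n,
            Real.exp (-(l * lam)) * (l * lam) ^ (n - l) / (n - l).factorial := by
  have hlaw : ∀ m : ℕ, P.real {ω | S 0 ω = m + 1} = lam ^ m * Real.exp (-lam) / m ! :=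
    fun m => by simpa [hμ, measureReal_def] using hform (m + 1) (by omega)
  have hsum : ∀ l ≤ n, P.real {ω | ∑ j ∈ range l, S j ω = n}
      = Real.exp (-(l * lam)) * (l * lam) ^ (n - l) / (n - l)! := fun l hln =>
    measureReal_sum_range_eq_of_shifted_poisson hmeas hindep hident hpos hlam.le hlaw hln
  rw [hE, ← measureReal_def, cond_real_sum_range_eq_div hmeas hpos hk hkn, hsum k hkn]
  exact congrArg _ (sum_congr rfl fun l hl => hsum l (mem_Icc.1 hl).2)
end

section
/- Let r be any real number and let 1 ≤ k ≤ n be integers. Then Σ_{(s_1,…,s_k)} ∏_{i=1}^{k} C(s_i + r − 2, s_i − 1) = C(n + k(r−1) − 1, n − k), where the sum ranges over all k-tuples of positive integers (s_1,…,s_k) with s_1 + ⋯ + s_k = n, and C(t, m) = t(t−1)⋯(t−m+1)/m! denotes the generalized binomial coefficient for real t and nonnegative integer m. -/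
/-- Generalized binomial coefficient `C(t, m) = t(t−1)⋯(t−m+1)/m!` for real `t`
and natural `m`. -/
noncomputable def genChoose (t : ℝ) (m : ℕ) : ℝ :=
  (∏ i ∈ Finset.range m, (t - i)) / m.factorial

/-!
Writing `s i = t i + 1`, each factor `C(t + r − 1, t)` is the multiset coefficient
`Ring.multichoose r t`, the coefficient of `x^t` in `(1 − x)^(−r)`. Multiplying these series,
the sum over the weak compositions `t` of `n − k` is `Ring.multichoose (k r) (n − k)`.
The required Vandermonde identity for `multichoose` is Chu–Vandermonde for `Ring.choose`
after upper negation, `multichoose r j = (-1)^j • choose (-r) j`.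
-/

open Finset

theorem genChoose_eq_ringChoose (t : ℝ) (m : ℕ) : genChoose t m = Ring.choose t m := by
  rw [genChoose, Ring.choose_eq_smul, ← descPochhammer_eval_eq_prod_range, smul_eq_mul,
    inv_mul_eq_div, ← Polynomial.aeval_eq_smeval, Polynomial.aeval_def,
    Polynomial.eval₂_eq_eval_map, descPochhammer_map]

namespace Ring

variable {R : Type*} [CommRing R] [BinomialRing R]

theorem multichoose_eq_negOnePow_smul_choose_neg (r : R) (n : ℕ) :
    multichoose r n = Int.negOnePow n • choose (-r) n := by
  rw [choose_neg', smul_smul, ← Int.negOnePow_add, Int.negOnePow_even _ (by simp), one_smul]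

theorem multichoose_add (r s : R) (k : ℕ) :
    multichoose (r + s) k = ∑ ij ∈ antidiagonal k, multichoose r ij.1 * multichoose s ij.2 := by
  rw [multichoose_eq_negOnePow_smul_choose_neg, neg_add, add_choose_eq k (Commute.all _ _),
    smul_sum]
  refine sum_congr rfl fun ij hij => ?_
  rw [multichoose_eq_negOnePow_smul_choose_neg, multichoose_eq_negOnePow_smul_choose_neg,
    smul_mul_smul_comm, ← Int.negOnePow_add, ← Nat.cast_add, mem_antidiagonal.1 hij]

theorem multichoose_sum {ι : Type*} [DecidableEq ι] (s : Finset ι) (x : ι → R) (m : ℕ) :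
    multichoose (∑ i ∈ s, x i) m = ∑ t ∈ s.piAntidiag m, ∏ i ∈ s, multichoose (x i) (t i) := by
  induction s using Finset.cons_induction generalizing m with
  | empty => cases m <;> simp [multichoose_zero_succ]
  | cons a s ha ih =>
    rw [sum_cons, multichoose_add, piAntidiag_cons, sum_disjiUnion]
    refine sum_congr rfl fun p _ => ?_
    rw [ih, mul_sum, sum_map]
    refine sum_congr rfl fun t ht => ?_
    have hta : t a = 0 := by
      by_contra h
      exact ha ((mem_piAntidiag.1 ht).2 a h)
    rw [prod_cons]
    simp only [addRightEmbedding_apply, Pi.add_apply, hta, zero_add]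
    congr 1
    refine prod_congr rfl fun i hi => ?_
    rw [if_neg (ne_of_mem_of_not_mem hi ha), add_zero]

end Ring

theorem filter_pos_sum_eq_map_piAntidiag {ι : Type*} [Fintype ι] [DecidableEq ι] {n : ℕ}
    [DecidablePred fun s : ι → ℕ => (∀ j, 0 < s j) ∧ ∑ j, s j = n] (hn : Fintype.card ι ≤ n) :
    filter (fun s : ι → ℕ => (∀ j, 0 < s j) ∧ ∑ j, s j = n)
        (Fintype.piFinset fun _ => Icc 1 n)
      = (univ.piAntidiag (n - Fintype.card ι)).map (addRightEmbedding 1) := by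
  ext s
  simp only [mem_filter, Fintype.mem_piFinset, mem_map, mem_piAntidiag, addRightEmbedding_apply,
    mem_univ, implies_true, and_true]
  constructor
  · rintro ⟨-, hpos, hsum⟩
    refine ⟨s - 1, ?_, funext fun j => Nat.sub_add_cancel (hpos j)⟩
    change ∑ j, (s j - 1) = _
    rw [sum_tsub_distrib _ fun j _ => hpos j]
    simp [hsum]
  · rintro ⟨t, ht, rfl⟩
    have hsum : ∑ j, (t + 1) j = n := by
      simp [sum_add_distrib, ht, hn]
    refine ⟨fun j => mem_Icc.2 ⟨by simp, ?_⟩, fun j => by simp, hsum⟩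
    rw [← hsum]
    exact single_le_sum (fun _ _ => Nat.zero_le _) (mem_univ j)

theorem genChoose_eq_multichoose (r : ℝ) (j : ℕ) :
    genChoose (j + r - 1) j = Ring.multichoose r j := by
  rw [genChoose_eq_ringChoose, Ring.multichoose_eq, add_comm (j : ℝ)]

theorem vandermonde_convolution_compositions_general
    (r : ℝ) (n k : ℕ) (hkn : k ≤ n) :
    (∑ s ∈ Finset.filter
        (fun s : Fin k → ℕ => (∀ j, 0 < s j) ∧ ∑ j, s j = n)
        (Fintype.piFinset fun _ => Finset.Icc 1 n),
      ∏ i, genChoose ((s i : ℝ) + r - 2) (s i - 1))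
      = genChoose ((n : ℝ) + k * (r - 1) - 1) (n - k) := by
  calc _ = ∑ t ∈ univ.piAntidiag (n - k), ∏ i, Ring.multichoose r (t i) := by
        rw [filter_pos_sum_eq_map_piAntidiag (by simpa using hkn), sum_map, Fintype.card_fin]
        refine sum_congr rfl fun t _ => prod_congr rfl fun i _ => ?_
        rw [← genChoose_eq_multichoose]
        simp only [addRightEmbedding_apply, Pi.add_apply, Pi.one_apply, Nat.add_sub_cancel]
        congr 1
        push_cast
        ring
    _ = Ring.multichoose (∑ _i : Fin k, r) (n - k) := (Ring.multichoose_sum _ _ _).symm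
    _ = _ := by
        rw [← genChoose_eq_multichoose]
        congr 1
        simp only [sum_const, card_univ, Fintype.card_fin, nsmul_eq_mul, Nat.cast_sub hkn]
        ring

/-- For any real `r` and integers `1 ≤ k ≤ n`,
`∑_{(s_1,…,s_k)} ∏_{i=1}^k C(s_i + r − 2, s_i − 1) = C(n + k(r−1) − 1, n − k)`,
the sum over all `k`-tuples of positive integers summing to `n`. -/
theorem vandermonde_convolution_compositions
    (r : ℝ) (n k : ℕ) (hk : 1 ≤ k) (hkn : k ≤ n) :
    (∑ s ∈ Finset.filter
        (fun s : Fin k → ℕ => (∀ j, 0 < s j) ∧ ∑ j, s j = n)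
        (Fintype.piFinset fun _ => Finset.Icc 1 n),
      ∏ i, genChoose ((s i : ℝ) + r - 2) (s i - 1))
      = genChoose ((n : ℝ) + k * (r - 1) - 1) (n - k) :=
  vandermonde_convolution_compositions_general r n k hkn
end
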